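/- arXiv:2502.20565 — 4 statements merged into one kernel-verified Lean document; each statement's English description precedes it below -/
import Mathlib

section
/- If f : ℝ^d → ℝ is L-smooth, λ > 0, and f_λ(x) = E_v[f(x + λv)] with v uniform on the ball of radius √d, then for all x, ‖∇f(x) − ∇f_λ(x)‖ ≤ (L/2)·λ·d^{3/2}. -/
/-! Differentiating under the integral sign gives `∇f_λ(x) = E[∇f(x + λv)]`, so
`∇f(x) - ∇f_λ(x) = E[∇f(x) - ∇f(x + λv)]` has norm at most `L λ E‖v‖`. In polar coordinates the
mean norm of the uniform distribution on a ball of radius `r` in `ℝ^d` is `d r / (d + 1)`, which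
for `r = √d` is at most `d^{3/2} / 2` once `d ≥ 1`. -/

open MeasureTheory

/-- The uniform probability measure on the Euclidean ball of radius `√d` in `ℝ^d`. -/
noncomputable def ballUniform (d : ℕ) : Measure (EuclideanSpace ℝ (Fin d)) :=
  (volume (Metric.closedBall (0 : EuclideanSpace ℝ (Fin d)) (Real.sqrt d)))⁻¹ •
    volume.restrict (Metric.closedBall (0 : EuclideanSpace ℝ (Fin d)) (Real.sqrt d))

open Metric Module InnerProductSpace

theorem nonneg_of_norm_sub_le_mul_norm_sub {E F : Type*} [NormedAddCommGroup E] [Nontrivial E]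
    [SeminormedAddCommGroup F] {g : E → F} {L : ℝ} (hg : ∀ x y, ‖g x - g y‖ ≤ L * ‖x - y‖) :
    0 ≤ L := by
  obtain ⟨y, hy⟩ := exists_ne (0 : E)
  exact nonneg_of_mul_nonneg_left ((norm_nonneg _).trans (hg y 0))
    (norm_pos_iff.mpr (sub_ne_zero.mpr hy))

section BoundedSupport

variable {E F : Type*} [NormedAddCommGroup E] [NormedSpace ℝ E] [FiniteDimensional ℝ E]
  [MeasurableSpace E] [BorelSpace E] [NormedAddCommGroup F] {μ : Measure E} [IsFiniteMeasure μ]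
  {R : ℝ}

theorem Continuous.integrable_of_ae_norm_le (hμ : ∀ᵐ v ∂μ, ‖v‖ ≤ R) {g : E → F}
    (hg : Continuous g) : Integrable g μ := by
  obtain ⟨C, hC⟩ := (isCompact_closedBall (0 : E) R).exists_bound_of_continuousOn hg.continuousOn
  refine .of_bound hg.aestronglyMeasurable C ?_
  filter_upwards [hμ] with v hv
  exact hC v (mem_closedBall_zero_iff.mpr hv)

variable [NormedSpace ℝ F]

theorem hasFDerivAt_integral_comp_add_smul (hμ : ∀ᵐ v ∂μ, ‖v‖ ≤ R) {f : E → F}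
    (hf : Differentiable ℝ f) (hf' : Continuous (fderiv ℝ f)) (c : ℝ) (x : E) :
    HasFDerivAt (fun y ↦ ∫ v, f (y + c • v) ∂μ) (∫ v, fderiv ℝ f (x + c • v) ∂μ) x := by
  have hshift : ∀ y : E, Continuous fun v : E ↦ y + c • v := fun y ↦ by fun_prop
  obtain ⟨C, hC⟩ := (isCompact_closedBall x (1 + |c| * R)).exists_bound_of_continuousOn
    hf'.continuousOn
  refine hasFDerivAt_integral_of_dominated_of_fderiv_le
    (F' := fun y v ↦ fderiv ℝ f (y + c • v)) (bound := fun _ ↦ C)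
    (ball_mem_nhds x one_pos)
    (.of_forall fun y ↦ (hf.continuous.comp (hshift y)).aestronglyMeasurable)
    ((hf.continuous.comp (hshift x)).integrable_of_ae_norm_le hμ)
    (hf'.comp (hshift x)).aestronglyMeasurable ?_ (integrable_const C) ?_
  · filter_upwards [hμ] with v hv y hy
    refine hC _ ?_
    rw [mem_closedBall, dist_eq_norm, add_sub_right_comm]
    calc ‖y - x + c • v‖ ≤ ‖y - x‖ + |c| * ‖v‖ := by
          simpa [norm_smul] using norm_add_le (y - x) (c • v)
      _ ≤ 1 + |c| * R := by
          gcongr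
          exact (mem_ball_iff_norm.mp hy).le
  · exact .of_forall fun v y _ ↦ (hf _).hasFDerivAt.comp y ((hasFDerivAt_id y).add_const _)

theorem norm_sub_integral_comp_add_smul_le [CompleteSpace F] [IsProbabilityMeasure μ]
    (hμ : ∀ᵐ v ∂μ, ‖v‖ ≤ R) {g : E → F} {K : NNReal} (hg : LipschitzWith K g) (c : ℝ) (x : E) :
    ‖g x - ∫ v, g (x + c • v) ∂μ‖ ≤ K * |c| * ∫ v, ‖v‖ ∂μ := by
  have hshift : Integrable (fun v ↦ g (x + c • v)) μ :=
    (hg.continuous.comp (by fun_prop)).integrable_of_ae_norm_le hμ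
  calc ‖g x - ∫ v, g (x + c • v) ∂μ‖ = ‖∫ v, (g x - g (x + c • v)) ∂μ‖ := by
        rw [integral_sub (integrable_const _) hshift, integral_const, probReal_univ, one_smul]
    _ ≤ ∫ v, ‖g x - g (x + c • v)‖ ∂μ := norm_integral_le_integral_norm _
    _ ≤ ∫ v, K * |c| * ‖v‖ ∂μ := by
        refine integral_mono_of_nonneg (.of_forall fun _ ↦ norm_nonneg _)
          ((continuous_norm.integrable_of_ae_norm_le hμ).const_mul _) (.of_forall fun v ↦ ?_)
        simpa [← dist_eq_norm, norm_smul, mul_assoc] using hg.dist_le_mul x (x + c • v)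
    _ = K * |c| * ∫ v, ‖v‖ ∂μ := integral_const_mul _ _

end BoundedSupport

section InnerProduct

variable {E : Type*} [NormedAddCommGroup E] [InnerProductSpace ℝ E] [FiniteDimensional ℝ E]
  [MeasurableSpace E] [BorelSpace E] {μ : Measure E} [IsFiniteMeasure μ] {R : ℝ}

theorem hasGradientAt_integral_comp_add_smul (hμ : ∀ᵐ v ∂μ, ‖v‖ ≤ R)
    {f : E → ℝ} (hf : Differentiable ℝ f) (hf' : Continuous (gradient f)) (c : ℝ) (x : E) :
    HasGradientAt (fun y ↦ ∫ v, f (y + c • v) ∂μ) (∫ v, gradient f (x + c • v) ∂μ) x := by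
  have hfderiv : fderiv ℝ f = fun y ↦ toDual ℝ E (gradient f y) := by
    funext y; simp [gradient]
  have hcomm : ∫ v, toDual ℝ E (gradient f (x + c • v)) ∂μ
      = toDual ℝ E (∫ v, gradient f (x + c • v) ∂μ) :=
    (toDual ℝ E).toLinearIsometry.integral_comp_comm _
  have hfderiv_cont : Continuous (fderiv ℝ f) := hfderiv ▸ (toDual ℝ E).continuous.comp hf'
  simpa only [hasGradientAt_iff_hasFDerivAt, hfderiv, hcomm]
    using hasFDerivAt_integral_comp_add_smul hμ hf hfderiv_cont c x

end InnerProduct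

theorem setIntegral_norm_closedBall {E : Type*} [NormedAddCommGroup E] [NormedSpace ℝ E]
    [FiniteDimensional ℝ E] [MeasurableSpace E] [BorelSpace E] (μ : Measure E)
    [μ.IsAddHaarMeasure] (r : ℝ) :
    ∫ x in closedBall (0 : E) r, ‖x‖ ∂μ
      = finrank ℝ E / (finrank ℝ E + 1) * r * μ.real (closedBall 0 r) := by
  rcases subsingleton_or_nontrivial E with hE | hE
  · simp [norm_of_subsingleton, finrank_zero_of_subsingleton]
  rcases lt_or_ge r 0 with hr | hr
  · simp [closedBall_eq_empty.mpr hr]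
  have hn : 0 < finrank ℝ E := finrank_pos
  have hradial : ∫ x in closedBall (0 : E) r, ‖x‖ ∂μ = ∫ x, (Set.Iic r).indicator id ‖x‖ ∂μ := by
    rw [← integral_indicator measurableSet_closedBall]
    congr with x
    by_cases hx : ‖x‖ ≤ r <;> simp [Set.indicator, hx]
  have hpolar : ∫ y in Set.Ioi (0 : ℝ), y ^ (finrank ℝ E - 1) • (Set.Iic r).indicator id y
      = r ^ (finrank ℝ E + 1) / (finrank ℝ E + 1) := by
    have hintegrand : (fun y : ℝ ↦ y ^ (finrank ℝ E - 1) • (Set.Iic r).indicator id y)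
        = (Set.Iic r).indicator (· ^ finrank ℝ E) := by
      ext y
      by_cases hy : y ≤ r <;> simp [Set.indicator, hy, pow_sub_one_mul hn.ne']
    rw [hintegrand, setIntegral_indicator measurableSet_Iic, Set.Ioi_inter_Iic,
      ← intervalIntegral.integral_of_le hr, integral_pow]
    simp
  rw [hradial, integral_fun_norm_addHaar, hpolar, Measure.addHaar_real_closedBall μ _ hr,
    nsmul_eq_mul, smul_eq_mul]
  field_simp
  ring

theorem div_add_one_mul_sqrt_le {t : ℝ} (ht : 1 ≤ t) :
    t / (t + 1) * √t ≤ t ^ ((3 : ℝ) / 2) / 2 := by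
  have hpow : t ^ ((3 : ℝ) / 2) = t * √t := by
    rw [show (3 : ℝ) / 2 = 1 + 1 / 2 by norm_num, Real.rpow_add (by linarith), Real.rpow_one,
      ← Real.sqrt_eq_rpow]
  have hfrac : t / (t + 1) ≤ t / 2 := by gcongr; linarith
  rw [hpow, mul_div_right_comm]
  gcongr

section BallUniform

variable {d : ℕ}

theorem isProbabilityMeasure_ballUniform (hd : 0 < d) : IsProbabilityMeasure (ballUniform d) := by
  have hpos : volume (closedBall (0 : EuclideanSpace ℝ (Fin d)) √d) ≠ 0 :=
    (measure_closedBall_pos _ _ (Real.sqrt_pos.mpr (by exact_mod_cast hd))).ne'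
  constructor
  rw [ballUniform, Measure.smul_apply, Measure.restrict_apply_univ, smul_eq_mul]
  exact ENNReal.inv_mul_cancel hpos measure_closedBall_lt_top.ne

theorem ae_norm_le_ballUniform (d : ℕ) : ∀ᵐ v ∂(ballUniform d), ‖v‖ ≤ √d := by
  refine Measure.ae_smul_measure ?_ _
  filter_upwards [ae_restrict_mem measurableSet_closedBall] with v hv
  simpa using hv

theorem integral_norm_ballUniform (hd : 0 < d) :
    ∫ v, ‖v‖ ∂(ballUniform d) = d / (d + 1) * √d := by
  have hpos : volume.real (closedBall (0 : EuclideanSpace ℝ (Fin d)) √d) ≠ 0 :=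
    (measureReal_ne_zero_iff measure_closedBall_lt_top.ne).mpr
      (measure_closedBall_pos _ _ (Real.sqrt_pos.mpr (by exact_mod_cast hd))).ne'
  rw [ballUniform, integral_smul_measure, setIntegral_norm_closedBall, finrank_euclideanSpace_fin,
    ENNReal.toReal_inv, ← measureReal_def, smul_eq_mul]
  field_simp

end BallUniform

/-- If `f : ℝ^d → ℝ` is L-smooth, `λ > 0`, and
`f_λ(x) = E_v[f(x + λ v)]` with `v` uniform on the ball of radius `√d`, then for all `x`,
`‖∇f(x) - ∇f_λ(x)‖ ≤ (L/2)·λ·d^{3/2}`. -/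
theorem stmt1 {d : ℕ} (f : EuclideanSpace ℝ (Fin d) → ℝ) (L lam : ℝ)
    (hlam : 0 < lam)
    (hdiff : ∀ x, DifferentiableAt ℝ f x)
    (hsmooth : ∀ x y, ‖gradient f x - gradient f y‖ ≤ L * ‖x - y‖)
    (flam : EuclideanSpace ℝ (Fin d) → ℝ)
    (hflam : ∀ x, flam x = ∫ v, f (x + lam • v) ∂(ballUniform d))
    (x : EuclideanSpace ℝ (Fin d)) :
    ‖gradient f x - gradient flam x‖ ≤ (L / 2) * lam * (d : ℝ) ^ ((3 : ℝ) / 2) := by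
  rcases Nat.eq_zero_or_pos d with rfl | hd
  · simp [norm_of_subsingleton]
  have := isProbabilityMeasure_ballUniform hd
  have : NeZero d := ⟨hd.ne'⟩
  have hL : 0 ≤ L := nonneg_of_norm_sub_le_mul_norm_sub hsmooth
  have hlip : LipschitzWith L.toNNReal (gradient f) :=
    LipschitzWith.of_dist_le' fun a b ↦ by simpa [dist_eq_norm] using hsmooth a b
  have hgrad : gradient flam x = ∫ v, gradient f (x + lam • v) ∂(ballUniform d) := by
    rw [funext hflam]
    exact (hasGradientAt_integral_comp_add_smul (ae_norm_le_ballUniform d) hdiff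
      hlip.continuous lam x).gradient
  calc ‖gradient f x - gradient flam x‖ ≤ L * lam * (d / (d + 1) * √d) := by
        simpa [hgrad, integral_norm_ballUniform hd, hL, abs_of_pos hlam] using
          norm_sub_integral_comp_add_smul_le (ae_norm_le_ballUniform d) hlip lam x
    _ ≤ L * lam * ((d : ℝ) ^ ((3 : ℝ) / 2) / 2) := by
        gcongr
        exact div_add_one_mul_sqrt_le (by exact_mod_cast hd)
    _ = L / 2 * lam * (d : ℝ) ^ ((3 : ℝ) / 2) := by ring
end

section
/- If f : ℝ^d → ℝ is L-smooth and g(x) = ((f(x + λu) − f(x − λu))/(2λ))·u with u uniform on the sphere of radius √d, then E_u[‖g(x)‖²] ≤ 2d·‖∇f(x)‖² + (L²/2)·λ²·d³. -/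
/-!
Write `c` for the central difference quotient and `b = ⟪∇f x, u⟫`. The descent lemma at
`x ± λu` gives `|c - b| ≤ L λ ‖u‖² / 2`, and `c² ≤ 2b² + 2(c - b)²`, so on the sphere
`‖u‖² = d` we get `‖c • u‖² ≤ 2d b² + L² λ² d³ / 2` pointwise. Rotation invariance makes `μ`
isotropic: reflections exchange any two vectors of equal norm, so `E⟪w, u⟫²` is the same for
all unit `w`, and summing over an orthonormal basis gives `E⟪v, u⟫² = ‖v‖² E‖u‖² / d = ‖v‖²`.
-/

open MeasureTheory

open scoped RealInnerProductSpace

section Smooth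

variable {F : Type*} [NormedAddCommGroup F] [InnerProductSpace ℝ F] [CompleteSpace F]
  {f : F → ℝ} {L : ℝ}

theorem hasDerivAt_comp_add_smul_of_differentiableAt {a v : F} {t : ℝ}
    (hf : DifferentiableAt ℝ f (a + t • v)) :
    HasDerivAt (fun s : ℝ => f (a + s • v)) ⟪gradient f (a + t • v), v⟫ t := by
  have hline : HasDerivAt (fun s : ℝ => a + s • v) v t := by
    simpa using ((hasDerivAt_id t).smul_const v).const_add a
  rw [inner_gradient_left]
  exact hf.hasFDerivAt.comp_hasDerivAt t hline

theorem abs_sub_sub_inner_gradient_le (hdiff : ∀ x, DifferentiableAt ℝ f x)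
    (hsmooth : ∀ x y, ‖gradient f x - gradient f y‖ ≤ L * ‖x - y‖) (a b : F) :
    |f b - f a - ⟪gradient f a, b - a⟫| ≤ L / 2 * ‖b - a‖ ^ 2 := by
  set v := b - a
  set φ : ℝ → ℝ := fun t => f (a + t • v) - f a - t * ⟪gradient f a, v⟫
  have hφ : ∀ t, HasDerivAt φ ⟪gradient f (a + t • v) - gradient f a, v⟫ t := fun t => by
    rw [inner_sub_left]
    exact ((hasDerivAt_comp_add_smul_of_differentiableAt (hdiff _)).sub_const _).sub
      (hasDerivAt_mul_const _)
  have hφ_le : ∀ t ∈ Set.Ico (0 : ℝ) 1,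
      ‖⟪gradient f (a + t • v) - gradient f a, v⟫‖ ≤ L * ‖v‖ ^ 2 * t := fun t ht =>
    calc ‖⟪gradient f (a + t • v) - gradient f a, v⟫‖
        ≤ ‖gradient f (a + t • v) - gradient f a‖ * ‖v‖ := norm_inner_le_norm _ _
      _ ≤ L * ‖a + t • v - a‖ * ‖v‖ := by gcongr; exact hsmooth _ _
      _ = L * ‖v‖ ^ 2 * t := by
        rw [add_sub_cancel_left, norm_smul, Real.norm_of_nonneg ht.1]; ring
  have hB : ∀ t : ℝ, HasDerivAt (fun t => L * ‖v‖ ^ 2 / 2 * t ^ 2) (L * ‖v‖ ^ 2 * t) t :=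
    fun t => ((hasDerivAt_pow 2 t).const_mul _).congr_deriv (by push_cast; ring)
  have hφ_one := image_norm_le_of_norm_deriv_right_le_deriv_boundary
    (fun t _ => (hφ t).continuousAt.continuousWithinAt) (fun t _ => (hφ t).hasDerivWithinAt)
    (by simp [φ]) hB hφ_le (Set.right_mem_Icc.mpr zero_le_one)
  simpa [φ, v, Real.norm_eq_abs, div_mul_eq_mul_div] using hφ_one

theorem abs_sub_sub_two_inner_gradient_le (hdiff : ∀ x, DifferentiableAt ℝ f x)
    (hsmooth : ∀ x y, ‖gradient f x - gradient f y‖ ≤ L * ‖x - y‖) (x h : F) :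
    |f (x + h) - f (x - h) - 2 * ⟪gradient f x, h⟫| ≤ L * ‖h‖ ^ 2 := by
  have hplus := abs_sub_sub_inner_gradient_le hdiff hsmooth x (x + h)
  have hminus := abs_sub_sub_inner_gradient_le hdiff hsmooth x (x - h)
  rw [add_sub_cancel_left] at hplus
  rw [sub_sub_cancel_left, norm_neg, inner_neg_right] at hminus
  calc |f (x + h) - f (x - h) - 2 * ⟪gradient f x, h⟫|
      = |(f (x + h) - f x - ⟪gradient f x, h⟫) - (f (x - h) - f x - -⟪gradient f x, h⟫)| := by
        ring_nf
    _ ≤ L / 2 * ‖h‖ ^ 2 + L / 2 * ‖h‖ ^ 2 := (abs_sub _ _).trans (add_le_add hplus hminus)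
    _ = L * ‖h‖ ^ 2 := by ring

theorem norm_centralDifference_smul_sq_le (hdiff : ∀ x, DifferentiableAt ℝ f x)
    (hsmooth : ∀ x y, ‖gradient f x - gradient f y‖ ≤ L * ‖x - y‖) {lam : ℝ} (hlam : lam ≠ 0)
    (x u : F) :
    ‖((f (x + lam • u) - f (x - lam • u)) / (2 * lam)) • u‖ ^ 2 ≤
      2 * ‖u‖ ^ 2 * ⟪gradient f x, u⟫ ^ 2 + L ^ 2 / 2 * lam ^ 2 * ‖u‖ ^ 6 := by
  set c := (f (x + lam • u) - f (x - lam • u)) / (2 * lam)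
  set b := ⟪gradient f x, u⟫
  have hdiff_quot : |c - b| ≤ L * |lam| * ‖u‖ ^ 2 / 2 := by
    have h := abs_sub_sub_two_inner_gradient_le hdiff hsmooth x (lam • u)
    rw [real_inner_smul_right, norm_smul, mul_pow, Real.norm_eq_abs, sq_abs] at h
    have hcb : c - b = (f (x + lam • u) - f (x - lam • u) - 2 * (lam * b)) / (2 * lam) := by
      simp only [c]; field_simp
    rw [hcb, abs_div, abs_mul, abs_two, div_le_iff₀ (by positivity)]
    calc _ ≤ L * (lam ^ 2 * ‖u‖ ^ 2) := h
      _ = L * |lam| * ‖u‖ ^ 2 / 2 * (2 * |lam|) := by rw [← sq_abs lam]; ring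
  have hsq : (c - b) ^ 2 ≤ (L * |lam| * ‖u‖ ^ 2 / 2) ^ 2 :=
    sq_le_sq' (neg_le_of_abs_le hdiff_quot) (le_of_abs_le hdiff_quot)
  calc ‖c • u‖ ^ 2 = c ^ 2 * ‖u‖ ^ 2 := by rw [norm_smul, mul_pow, Real.norm_eq_abs, sq_abs]
    _ ≤ (2 * b ^ 2 + 2 * (c - b) ^ 2) * ‖u‖ ^ 2 := by
        gcongr; nlinarith [sq_nonneg (c - 2 * b)]
    _ ≤ (2 * b ^ 2 + 2 * (L * |lam| * ‖u‖ ^ 2 / 2) ^ 2) * ‖u‖ ^ 2 := by gcongr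
    _ = 2 * ‖u‖ ^ 2 * b ^ 2 + L ^ 2 / 2 * lam ^ 2 * ‖u‖ ^ 6 := by rw [← sq_abs lam]; ring

end Smooth

section Isotropic

variable {E : Type*} [NormedAddCommGroup E] [InnerProductSpace ℝ E] [MeasurableSpace E]
  [BorelSpace E] {μ : Measure E}

theorem integrable_inner_sq (hμ : Integrable (fun u => ‖u‖ ^ 2) μ) (w : E) :
    Integrable (fun u => ⟪w, u⟫ ^ 2) μ := by
  refine (hμ.const_mul (‖w‖ ^ 2)).mono' ((continuous_const.inner continuous_id).pow 2).aestronglyMeasurable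
    (Filter.Eventually.of_forall fun u => ?_)
  rw [Real.norm_eq_abs, abs_pow, ← mul_pow]
  exact pow_le_pow_left₀ (abs_nonneg _) (abs_real_inner_le_norm w u) 2

theorem integral_inner_sq_eq_of_norm_eq (hinv : ∀ T : E ≃ₗᵢ[ℝ] E, μ.map T = μ) {w₁ w₂ : E}
    (h : ‖w₁‖ = ‖w₂‖) : ∫ u, ⟪w₁, u⟫ ^ 2 ∂μ = ∫ u, ⟪w₂, u⟫ ^ 2 ∂μ := by
  set T := Submodule.reflection (ℝ ∙ (w₁ - w₂))ᗮ
  calc ∫ u, ⟪w₁, u⟫ ^ 2 ∂μ = ∫ u, ⟪T w₁, T u⟫ ^ 2 ∂μ := by simp only [T.inner_map_map]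
    _ = ∫ u, ⟪T w₁, u⟫ ^ 2 ∂(μ.map T) := by
        rw [integral_map T.continuous.aemeasurable
          ((continuous_const.inner continuous_id).pow 2).aestronglyMeasurable]
    _ = ∫ u, ⟪w₂, u⟫ ^ 2 ∂μ := by rw [hinv, Submodule.reflection_sub h]

theorem integral_inner_sq_mul_finrank [FiniteDimensional ℝ E]
    (hinv : ∀ T : E ≃ₗᵢ[ℝ] E, μ.map T = μ) (hμ : Integrable (fun u => ‖u‖ ^ 2) μ) (v : E) :
    (∫ u, ⟪v, u⟫ ^ 2 ∂μ) * Module.finrank ℝ E = ‖v‖ ^ 2 * ∫ u, ‖u‖ ^ 2 ∂μ := by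
  have hunit : ∀ w : E, ‖w‖ = 1 →
      (∫ u, ⟪w, u⟫ ^ 2 ∂μ) * Module.finrank ℝ E = ∫ u, ‖u‖ ^ 2 ∂μ := fun w hw => by
    set b := stdOrthonormalBasis ℝ E
    calc (∫ u, ⟪w, u⟫ ^ 2 ∂μ) * Module.finrank ℝ E = ∑ i, ∫ u, ⟪b i, u⟫ ^ 2 ∂μ := by
          simp [integral_inner_sq_eq_of_norm_eq hinv (w₁ := b _) (w₂ := w) (by simp [hw]),
            mul_comm]
      _ = ∫ u, ∑ i, ⟪b i, u⟫ ^ 2 ∂μ :=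
          (integral_finsetSum _ fun i _ => integrable_inner_sq hμ (b i)).symm
      _ = ∫ u, ‖u‖ ^ 2 ∂μ := by simp only [b.sum_sq_inner_right]
  rcases eq_or_ne v 0 with rfl | hv
  · simp
  obtain ⟨r, w, hw, rfl⟩ : ∃ (r : ℝ) (w : E), ‖w‖ = 1 ∧ v = r • w :=
    ⟨‖v‖, ‖v‖⁻¹ • v, norm_smul_inv_norm (𝕜 := ℝ) hv, by simp [smul_smul, hv]⟩
  simp only [real_inner_smul_left, mul_pow, integral_const_mul, norm_smul, Real.norm_eq_abs,
    sq_abs, hw, mul_one, ← hunit w hw, mul_assoc]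

/-- If `f : ℝ^d → ℝ` is L-smooth and
`g(x) = ((f(x+λu) - f(x-λu))/(2λ)) • u` with `u` uniform on the sphere of radius `√d`
(characterized as the rotation-invariant probability measure on that sphere), then
`E_u[‖g(x)‖²] ≤ 2d·‖∇f(x)‖² + (L²/2)·λ²·d³`. -/
theorem stmt3 {d : ℕ} (f : EuclideanSpace ℝ (Fin d) → ℝ) (L lam : ℝ)
    (hlam : 0 < lam)
    (hdiff : ∀ x, DifferentiableAt ℝ f x)
    (hsmooth : ∀ x y, ‖gradient f x - gradient f y‖ ≤ L * ‖x - y‖)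
    (μ : Measure (EuclideanSpace ℝ (Fin d))) [IsProbabilityMeasure μ]
    (hsupp : μ (Metric.sphere (0 : EuclideanSpace ℝ (Fin d)) (Real.sqrt d)) = 1)
    (hinv : ∀ T : EuclideanSpace ℝ (Fin d) ≃ₗᵢ[ℝ] EuclideanSpace ℝ (Fin d),
      Measure.map (⇑T) μ = μ)
    (x : EuclideanSpace ℝ (Fin d)) :
    (∫ u, ‖((f (x + lam • u) - f (x - lam • u)) / (2 * lam)) • u‖ ^ 2 ∂μ)
      ≤ 2 * d * ‖gradient f x‖ ^ 2 + (L ^ 2 / 2) * lam ^ 2 * (d : ℝ) ^ 3 := by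
  have hnorm_sq : ∀ᵐ u ∂μ, ‖u‖ ^ 2 = d := by
    filter_upwards [(mem_ae_iff_prob_eq_one Metric.isClosed_sphere.measurableSet).mpr hsupp]
      with u hu
    rw [mem_sphere_zero_iff_norm.mp hu, Real.sq_sqrt d.cast_nonneg]
  have hμ : Integrable (fun u => ‖u‖ ^ 2) μ :=
    (integrable_const (d : ℝ)).congr (hnorm_sq.mono fun _ hu => hu.symm)
  have hisotropy := integral_inner_sq_mul_finrank hinv hμ (gradient f x)
  rw [finrank_euclideanSpace_fin, integral_congr_ae hnorm_sq, integral_const] at hisotropy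
  calc (∫ u, ‖((f (x + lam • u) - f (x - lam • u)) / (2 * lam)) • u‖ ^ 2 ∂μ)
      ≤ ∫ u, (2 * d * ⟪gradient f x, u⟫ ^ 2 + L ^ 2 / 2 * lam ^ 2 * (d : ℝ) ^ 3) ∂μ := by
        refine integral_mono_of_nonneg (.of_forall fun _ => sq_nonneg _)
          (((integrable_inner_sq hμ _).const_mul _).add (integrable_const _)) ?_
        filter_upwards [hnorm_sq] with u hu
        have h := norm_centralDifference_smul_sq_le hdiff hsmooth hlam.ne' x u
        rwa [show ‖u‖ ^ 6 = (‖u‖ ^ 2) ^ 3 by ring, hu] at h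
    _ = 2 * d * ‖gradient f x‖ ^ 2 + L ^ 2 / 2 * lam ^ 2 * (d : ℝ) ^ 3 := by
        rw [integral_add ((integrable_inner_sq hμ _).const_mul _) (integrable_const _),
          integral_const_mul, integral_const]
        simp only [probReal_univ, smul_eq_mul, one_mul] at hisotropy ⊢
        linear_combination 2 * hisotropy
end Isotropic
end

section
/- If a mechanism M satisfies μ-Gaussian differential privacy, then it satisfies (ε, δ(ε))-differential privacy for every ε ≥ 0 with δ(ε) = Φ(−ε/μ + μ/2) − e^ε·Φ(−ε/μ − μ/2), where Φ is the standard normal CDF. -/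
open MeasureTheory ProbabilityTheory

/-!
The likelihood ratio of `N(μ,1)` to `N(0,1)` is increasing, so by Neyman–Pearson every test `ψ`
satisfies `E₀ ψ ≤ e^ε E_μ ψ + δ(ε)`, the extreme test being the indicator of the half-line
`x ≤ μ/2 - ε/μ` on which `p₀ ≥ e^ε p_μ`. Applied to `1 - φ`, this bound says that
`G_μ(α) ≥ e^{-ε} (1 - δ(ε) - α)`. By μ-GDP the same lower bound holds for `T(M x, M x')`, and
evaluating it at the size `M x (Eᶜ)` of the test `1_{Eᶜ}`, whose type II error is `M x' E`,
gives `M x E ≤ e^ε M x' E + δ(ε)`.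
-/

/-- The trade-off function `T(P, Q)(α) = inf {β_φ : α_φ ≤ α}` over measurable tests
`φ : Ω → [0,1]`, where `α_φ = ∫ φ dP` and `β_φ = 1 − ∫ φ dQ`. -/
noncomputable def tradeoff {Ω : Type*} [MeasurableSpace Ω] (P Q : Measure Ω) (α : ℝ) : ℝ :=
  sInf {β | ∃ φ : Ω → ℝ, Measurable φ ∧ (∀ ω, φ ω ∈ Set.Icc (0 : ℝ) 1) ∧
    (∫ ω, φ ω ∂P) ≤ α ∧ β = 1 - ∫ ω, φ ω ∂Q}

/-- The standard normal CDF `Φ`. -/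
noncomputable def stdNormalCDF (x : ℝ) : ℝ := cdf (gaussianReal 0 1) x

open Real Set

section Tradeoff

variable {Ω : Type*} [MeasurableSpace Ω] {P Q : Measure Ω} {φ : Ω → ℝ}

lemma integrable_of_forall_mem_Icc [IsFiniteMeasure P] (hφ : Measurable φ)
    (hφ01 : ∀ ω, φ ω ∈ Icc (0 : ℝ) 1) : Integrable φ P :=
  .of_bound hφ.aestronglyMeasurable 1 <| .of_forall fun ω => by
    rw [Real.norm_of_nonneg (hφ01 ω).1]; exact (hφ01 ω).2

lemma integral_one_sub_of_forall_mem_Icc [IsProbabilityMeasure P] (hφ : Measurable φ)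
    (hφ01 : ∀ ω, φ ω ∈ Icc (0 : ℝ) 1) : ∫ ω, (1 - φ ω) ∂P = 1 - ∫ ω, φ ω ∂P := by
  rw [integral_sub (integrable_const 1) (integrable_of_forall_mem_Icc hφ hφ01)]
  simp

lemma tradeoff_le_one_sub_integral [IsFiniteMeasure Q] (hφ : Measurable φ)
    (hφ01 : ∀ ω, φ ω ∈ Icc (0 : ℝ) 1) {α : ℝ} (hα : ∫ ω, φ ω ∂P ≤ α) :
    tradeoff P Q α ≤ 1 - ∫ ω, φ ω ∂Q := by
  refine csInf_le ⟨1 - Q.real univ, ?_⟩ ⟨φ, hφ, hφ01, hα, rfl⟩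
  rintro _ ⟨ψ, hψ, hψ01, -, rfl⟩
  have : ∫ ω, ψ ω ∂Q ≤ Q.real univ := by
    simpa using integral_mono (integrable_of_forall_mem_Icc hψ hψ01) (integrable_const 1)
      fun ω => (hψ01 ω).2
  linarith

/-- The indicator of `Eᶜ` is a test of size `P(Eᶜ)` and type II error `Q(E)`. -/
lemma tradeoff_measureReal_compl_le [IsProbabilityMeasure Q] {E : Set Ω}
    (hE : MeasurableSet E) : tradeoff P Q (P.real Eᶜ) ≤ Q.real E := by
  have h := tradeoff_le_one_sub_integral (P := P) (Q := Q) (measurable_one.indicator hE.compl)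
    (fun ω => by by_cases h : ω ∈ Eᶜ <;> simp [h]) (integral_indicator_one hE.compl).le
  rwa [integral_indicator_one hE.compl, probReal_compl_eq_one_sub (μ := Q) hE,
    sub_sub_cancel] at h

lemma exp_neg_mul_le_tradeoff [IsProbabilityMeasure P] [IsProbabilityMeasure Q] {ε δ : ℝ}
    (hDP : ∀ ψ : Ω → ℝ, Measurable ψ → (∀ ω, ψ ω ∈ Icc (0 : ℝ) 1) →
      ∫ ω, ψ ω ∂P ≤ exp ε * ∫ ω, ψ ω ∂Q + δ)
    {α : ℝ} (hα : 0 ≤ α) : exp (-ε) * (1 - α - δ) ≤ tradeoff P Q α := by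
  refine le_csInf ⟨1, 0, measurable_const, fun _ => by simp, by simpa using hα, by simp⟩ ?_
  rintro _ ⟨φ, hφ, hφ01, hφα, rfl⟩
  have h := hDP (fun ω => 1 - φ ω) (measurable_const.sub hφ)
    fun ω => ⟨by linarith [(hφ01 ω).2], by linarith [(hφ01 ω).1]⟩
  rw [integral_one_sub_of_forall_mem_Icc hφ hφ01, integral_one_sub_of_forall_mem_Icc hφ hφ01]
    at h
  rw [exp_neg, inv_mul_le_iff₀ (exp_pos ε)]
  linarith

lemma measure_le_of_exp_neg_mul_le_tradeoff [IsProbabilityMeasure P] [IsProbabilityMeasure Q]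
    {ε δ : ℝ} (hT : ∀ α ∈ Icc (0 : ℝ) 1, exp (-ε) * (1 - α - δ) ≤ tradeoff P Q α)
    {E : Set Ω} (hE : MeasurableSet E) :
    P E ≤ ENNReal.ofReal (exp ε) * Q E + ENNReal.ofReal δ := by
  have h := (hT _ ⟨measureReal_nonneg, measureReal_le_one⟩).trans
    (tradeoff_measureReal_compl_le (P := P) hE)
  rw [probReal_compl_eq_one_sub hE, sub_sub_cancel, exp_neg, inv_mul_le_iff₀ (exp_pos ε)] at h
  calc P E = ENNReal.ofReal (P.real E) := (ofReal_measureReal (measure_ne_top _ _)).symm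
    _ ≤ ENNReal.ofReal (exp ε * Q.real E) + ENNReal.ofReal δ :=
      (ENNReal.ofReal_le_ofReal (by linarith)).trans ENNReal.ofReal_add_le
    _ = ENNReal.ofReal (exp ε) * Q E + ENNReal.ofReal δ := by
      rw [ENNReal.ofReal_mul (exp_pos ε).le, ofReal_measureReal (measure_ne_top _ _)]

end Tradeoff

/-- Neyman–Pearson: against a signed density that is nonnegative exactly on `S`, no test
does better than the indicator of `S`. -/
lemma integral_mul_le_setIntegral_of_sign {α : Type*} [MeasurableSpace α] {ν : Measure α}
    {f ψ : α → ℝ} {S : Set α} (hS : MeasurableSet S) (hf : Integrable f ν)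
    (hψ : AEStronglyMeasurable ψ ν) (hψ01 : ∀ x, ψ x ∈ Icc (0 : ℝ) 1)
    (hf_pos : ∀ x ∈ S, 0 ≤ f x) (hf_neg : ∀ x ∉ S, f x ≤ 0) :
    ∫ x, f x * ψ x ∂ν ≤ ∫ x in S, f x ∂ν := by
  rw [← integral_indicator hS]
  refine integral_mono (hf.mul_bdd hψ (c := 1) (.of_forall fun x => ?_)) (hf.indicator hS)
    fun x => ?_
  · rw [Real.norm_of_nonneg (hψ01 x).1]; exact (hψ01 x).2
  by_cases hx : x ∈ S
  · rw [indicator_of_mem hx]; exact mul_le_of_le_one_right (hf_pos x hx) (hψ01 x).2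
  · rw [indicator_of_notMem hx]; exact mul_nonpos_of_nonpos_of_nonneg (hf_neg x hx) (hψ01 x).1

lemma gaussianPDFReal_one_eq_mul_exp (m x : ℝ) :
    gaussianPDFReal m 1 x = gaussianPDFReal 0 1 x * exp (m * x - m ^ 2 / 2) := by
  simp only [gaussianPDFReal, NNReal.coe_one, mul_assoc, ← exp_add]
  congr 2
  ring

lemma measureReal_gaussianReal_eq_setIntegral (m : ℝ) {v : NNReal} (hv : v ≠ 0) (s : Set ℝ) :
    (gaussianReal m v).real s = ∫ x in s, gaussianPDFReal m v x := by
  rw [measureReal_def, gaussianReal_apply_eq_integral m hv,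
    ENNReal.toReal_ofReal (setIntegral_nonneg_of_ae (.of_forall (gaussianPDFReal_nonneg m v)))]

lemma stdNormalCDF_sub (m t : ℝ) : stdNormalCDF (t - m) = (gaussianReal m 1).real (Iic t) := by
  have hshift : gaussianReal m 1 = (gaussianReal 0 1).map (· + m) := by
    rw [gaussianReal_map_add_const, zero_add]
  rw [stdNormalCDF, cdf_eq_real, hshift, map_measureReal_apply (measurable_add_const m)
    measurableSet_Iic, preimage_add_const_Iic]

/-- The likelihood ratio `p_μ / p₀ = exp (μ x - μ² / 2)` is increasing in `x`. -/
lemma gaussianPDFReal_sub_exp_mul_nonneg_iff {μ : ℝ} (hμ : 0 < μ) (ε x : ℝ) :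
    0 ≤ gaussianPDFReal 0 1 x - exp ε * gaussianPDFReal μ 1 x ↔ x ≤ -ε / μ + μ / 2 := by
  have hfactor : gaussianPDFReal 0 1 x - exp ε * gaussianPDFReal μ 1 x
      = gaussianPDFReal 0 1 x * (1 - exp (ε + (μ * x - μ ^ 2 / 2))) := by
    rw [gaussianPDFReal_one_eq_mul_exp μ x, exp_add]; ring
  have hscale : x ≤ -ε / μ + μ / 2 ↔ x * μ ≤ μ ^ 2 / 2 - ε := by
    rw [← mul_le_mul_iff_of_pos_right hμ, add_mul, div_mul_cancel₀ _ hμ.ne']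
    constructor <;> intro h <;> linarith
  rw [hfactor, mul_nonneg_iff_of_pos_left (gaussianPDFReal_pos 0 1 x one_ne_zero), sub_nonneg,
    exp_le_one_iff, hscale]
  constructor <;> intro h <;> linarith

lemma integral_gaussianReal_eq_integral_mul (m : ℝ) (ψ : ℝ → ℝ) :
    ∫ x, ψ x ∂gaussianReal m 1 = ∫ x, gaussianPDFReal m 1 x * ψ x :=
  integral_gaussianReal_eq_integral_smul one_ne_zero

lemma integral_gaussianReal_le_exp_mul_add {μ : ℝ} (hμ : 0 < μ) (ε : ℝ) {ψ : ℝ → ℝ}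
    (hψ : Measurable ψ) (hψ01 : ∀ x, ψ x ∈ Icc (0 : ℝ) 1) :
    ∫ x, ψ x ∂gaussianReal 0 1 ≤ exp ε * ∫ x, ψ x ∂gaussianReal μ 1 +
      (stdNormalCDF (-ε / μ + μ / 2) - exp ε * stdNormalCDF (-ε / μ - μ / 2)) := by
  set t := -ε / μ + μ / 2
  have hp := integrable_gaussianPDFReal 0 1
  have hq := (integrable_gaussianPDFReal μ 1).const_mul (exp ε)
  have hNP := integral_mul_le_setIntegral_of_sign (S := Iic t)
    (f := fun x => gaussianPDFReal 0 1 x - exp ε * gaussianPDFReal μ 1 x) measurableSet_Iic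
    (hp.sub hq) hψ.aestronglyMeasurable hψ01
    (fun x hx => (gaussianPDFReal_sub_exp_mul_nonneg_iff hμ ε x).2 hx)
    (fun x hx => (not_le.1 (mt (gaussianPDFReal_sub_exp_mul_nonneg_iff hμ ε x).1 hx)).le)
  have hΦ : stdNormalCDF t - exp ε * stdNormalCDF (-ε / μ - μ / 2)
      = ∫ x in Iic t, (gaussianPDFReal 0 1 x - exp ε * gaussianPDFReal μ 1 x) := by
    rw [integral_sub hp.integrableOn hq.integrableOn, integral_const_mul,
      ← measureReal_gaussianReal_eq_setIntegral 0 one_ne_zero,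
      ← measureReal_gaussianReal_eq_setIntegral μ one_ne_zero, ← stdNormalCDF_sub, sub_zero,
      ← stdNormalCDF_sub, show -ε / μ - μ / 2 = t - μ by ring]
  have hψ_le : ∀ᵐ x ∂volume, ‖ψ x‖ ≤ 1 := .of_forall fun x => by
    rw [Real.norm_of_nonneg (hψ01 x).1]; exact (hψ01 x).2
  have hψ_sm := hψ.aestronglyMeasurable (μ := volume)
  have hdiff : ∫ x, ψ x ∂gaussianReal 0 1 - exp ε * ∫ x, ψ x ∂gaussianReal μ 1
      = ∫ x, (gaussianPDFReal 0 1 x - exp ε * gaussianPDFReal μ 1 x) * ψ x := by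
    simp_rw [integral_gaussianReal_eq_integral_mul, sub_mul, mul_assoc]
    rw [integral_sub (hp.mul_bdd hψ_sm hψ_le), integral_const_mul]
    simpa only [mul_assoc] using hq.mul_bdd hψ_sm hψ_le
  rw [hΦ]
  linarith

/-- If a mechanism `M` is μ-GDP (its trade-off function between any two
neighboring outputs dominates `G_μ = T(N(0,1), N(μ,1))`), then it satisfies
`(ε, δ(ε))`-DP for every `ε ≥ 0` with
`δ(ε) = Φ(−ε/μ + μ/2) − e^ε Φ(−ε/μ − μ/2)`. -/
theorem stmt11 {X : Type*} {Ω : Type*} [MeasurableSpace Ω]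
    (Neighbor : X → X → Prop) (M : X → Measure Ω)
    (hM : ∀ x, IsProbabilityMeasure (M x)) (μ : ℝ) (hμ : 0 < μ)
    (hGDP : ∀ x x', Neighbor x x' → ∀ α ∈ Set.Icc (0 : ℝ) 1,
      tradeoff (gaussianReal 0 1) (gaussianReal μ 1) α ≤ tradeoff (M x) (M x') α) :
    ∀ ε : ℝ, 0 ≤ ε → ∀ x x', Neighbor x x' → ∀ E : Set Ω, MeasurableSet E →
      M x E ≤ ENNReal.ofReal (Real.exp ε) * M x' E +
        ENNReal.ofReal (stdNormalCDF (-ε / μ + μ / 2)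
          - Real.exp ε * stdNormalCDF (-ε / μ - μ / 2)) := by
  intro ε _ x x' hxx' E hE
  have := hM x
  have := hM x'
  refine measure_le_of_exp_neg_mul_le_tradeoff (fun α hα => ?_) hE
  exact (exp_neg_mul_le_tradeoff
    (fun ψ hψ hψ01 => integral_gaussianReal_le_exp_mul_add hμ ε hψ hψ01) hα.1).trans
    (hGDP x x' hxx' α hα)
end

section
/- The function δ(ε) = Φ(−ε/μ + μ/2) − e^ε·Φ(−ε/μ − μ/2) is nonincreasing in ε on [0, ∞) for every fixed μ > 0, and satisfies 0 ≤ δ(ε) ≤ 1. -/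
open MeasureTheory ProbabilityTheory

/-!
Write `b = -ε/μ - μ/2`, so that `δ(ε) = Φ(b + μ) - e^ε Φ(b)`. The standard normal density has
likelihood ratio `φ(t + μ) / φ(t) = exp (-(μ t + μ²/2))`, which equals `e^ε` at `t = b`. Hence the
density terms in `δ'` cancel and `δ'(ε) = -e^ε Φ(b) ≤ 0`. For `t ≤ b` the ratio is at least `e^ε`,
and integrating over `(-∞, b]` gives `e^ε Φ(b) ≤ Φ(b + μ)`, i.e. `δ ≥ 0`; `δ ≤ Φ ≤ 1` is immediate.
-/

open Set Real

namespace ProbabilityTheory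

lemma continuous_gaussianPDFReal (m : ℝ) (v : NNReal) : Continuous (gaussianPDFReal m v) := by
  unfold gaussianPDFReal
  fun_prop

lemma cdf_gaussianReal_eq_integral (m : ℝ) {v : NNReal} (hv : v ≠ 0) (x : ℝ) :
    cdf (gaussianReal m v) x = ∫ t in Iic x, gaussianPDFReal m v t := by
  rw [cdf_eq_real, measureReal_def, gaussianReal_apply_eq_integral m hv,
    ENNReal.toReal_ofReal
      (setIntegral_nonneg measurableSet_Iic fun t _ => gaussianPDFReal_nonneg _ _ _)]

lemma gaussianPDFReal_zero_one_add (x m : ℝ) :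
    gaussianPDFReal 0 1 (x + m) = exp (-(m * x + m ^ 2 / 2)) * gaussianPDFReal 0 1 x := by
  simp only [gaussianPDFReal, NNReal.coe_one, mul_one, sub_zero]
  rw [mul_left_comm, ← exp_add]
  ring_nf

end ProbabilityTheory

lemma stdNormalCDF_eq_integral (x : ℝ) :
    stdNormalCDF x = ∫ t in Iic x, gaussianPDFReal 0 1 t :=
  cdf_gaussianReal_eq_integral 0 one_ne_zero x

lemma stdNormalCDF_add_eq_integral (x m : ℝ) :
    stdNormalCDF (x + m) = ∫ t in Iic x, gaussianPDFReal 0 1 (t + m) := by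
  have hmap : (gaussianReal (-m) 1).map (· + m) = gaussianReal 0 1 := by
    rw [gaussianReal_map_add_const, neg_add_cancel]
  simp_rw [gaussianPDFReal_add, zero_sub]
  rw [← cdf_gaussianReal_eq_integral _ one_ne_zero, stdNormalCDF, cdf_eq_real, cdf_eq_real,
    ← hmap, map_measureReal_apply (measurable_add_const m) measurableSet_Iic]
  congr 1
  ext y
  simp

lemma exp_mul_stdNormalCDF_le_stdNormalCDF_add {m : ℝ} (hm : 0 ≤ m) (b : ℝ) :
    exp (-(m * b + m ^ 2 / 2)) * stdNormalCDF b ≤ stdNormalCDF (b + m) := by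
  rw [stdNormalCDF_add_eq_integral, stdNormalCDF_eq_integral, ← integral_const_mul]
  refine setIntegral_mono_on ((integrable_gaussianPDFReal 0 1).const_mul _).integrableOn
    ((integrable_gaussianPDFReal 0 1).comp_add_right m).integrableOn measurableSet_Iic
    fun t (ht : t ≤ b) => ?_
  rw [gaussianPDFReal_zero_one_add]
  exact mul_le_mul_of_nonneg_right (exp_le_exp.mpr (by nlinarith)) (gaussianPDFReal_nonneg _ _ _)

lemma hasDerivAt_stdNormalCDF (x : ℝ) :
    HasDerivAt stdNormalCDF (gaussianPDFReal 0 1 x) x := by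
  have hint := integrable_gaussianPDFReal 0 1
  have hcont := continuous_gaussianPDFReal 0 1
  have hΦ : stdNormalCDF = fun u => stdNormalCDF 0 + ∫ t in (0 : ℝ)..u, gaussianPDFReal 0 1 t := by
    funext u
    rw [← intervalIntegral.integral_Iic_sub_Iic hint.integrableOn hint.integrableOn,
      stdNormalCDF_eq_integral, stdNormalCDF_eq_integral, add_sub_cancel]
  rw [hΦ]
  exact (intervalIntegral.integral_hasDerivAt_right hint.intervalIntegrable
    hcont.stronglyMeasurable.stronglyMeasurableAtFilter hcont.continuousAt).const_add _

noncomputable def gdpPrivacyProfile (μ ε : ℝ) : ℝ :=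
  stdNormalCDF (-ε / μ + μ / 2) - exp ε * stdNormalCDF (-ε / μ - μ / 2)

lemma hasDerivAt_gdpPrivacyProfile {μ : ℝ} (hμ : μ ≠ 0) (ε : ℝ) :
    HasDerivAt (gdpPrivacyProfile μ) (-(exp ε * stdNormalCDF (-ε / μ - μ / 2))) ε := by
  have hlin : ∀ c : ℝ, HasDerivAt (fun e : ℝ => -e / μ + c) (-1 / μ) ε := fun c =>
    ((hasDerivAt_id ε).neg.div_const μ).add_const c
  have hΦ₁ := (hasDerivAt_stdNormalCDF _).comp ε (hlin (μ / 2))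
  have hΦ₂ := (hasDerivAt_stdNormalCDF _).comp ε (hlin (-(μ / 2)))
  simp only [← sub_eq_add_neg] at hΦ₂
  have hratio : gaussianPDFReal 0 1 (-ε / μ + μ / 2) =
      exp ε * gaussianPDFReal 0 1 (-ε / μ - μ / 2) := by
    rw [show -ε / μ + μ / 2 = (-ε / μ - μ / 2) + μ by ring, gaussianPDFReal_zero_one_add]
    congr 2
    field_simp
    ring
  refine (hΦ₁.sub ((hasDerivAt_exp ε).mul hΦ₂)).congr_deriv ?_
  rw [hratio, Function.comp_apply]
  ring

lemma antitone_gdpPrivacyProfile {μ : ℝ} (hμ : μ ≠ 0) : Antitone (gdpPrivacyProfile μ) := by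
  refine antitone_of_hasDerivAt_nonpos (hasDerivAt_gdpPrivacyProfile hμ) fun ε => ?_
  exact neg_nonpos.mpr (mul_nonneg (exp_pos ε).le (cdf_nonneg _ _))

lemma gdpPrivacyProfile_nonneg {μ : ℝ} (hμ : 0 < μ) (ε : ℝ) : 0 ≤ gdpPrivacyProfile μ ε := by
  have h := exp_mul_stdNormalCDF_le_stdNormalCDF_add hμ.le (-ε / μ - μ / 2)
  rw [show μ * (-ε / μ - μ / 2) + μ ^ 2 / 2 = -ε by field_simp; ring, neg_neg,
    show -ε / μ - μ / 2 + μ = -ε / μ + μ / 2 by ring] at h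
  exact sub_nonneg.mpr h

lemma gdpPrivacyProfile_le_one (μ ε : ℝ) : gdpPrivacyProfile μ ε ≤ 1 :=
  (sub_le_self _ (mul_nonneg (exp_pos ε).le (cdf_nonneg _ _))).trans (cdf_le_one _ _)

/-- For every fixed `μ > 0`, the privacy profile
`δ(ε) = Φ(−ε/μ + μ/2) − e^ε Φ(−ε/μ − μ/2)` is nonincreasing in `ε` on `[0, ∞)` and
satisfies `0 ≤ δ(ε) ≤ 1` there. -/
theorem stmt12 (μ : ℝ) (hμ : 0 < μ) :
    (∀ ε₁ ε₂ : ℝ, 0 ≤ ε₁ → ε₁ ≤ ε₂ →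
      stdNormalCDF (-ε₂ / μ + μ / 2) - Real.exp ε₂ * stdNormalCDF (-ε₂ / μ - μ / 2) ≤
        stdNormalCDF (-ε₁ / μ + μ / 2) - Real.exp ε₁ * stdNormalCDF (-ε₁ / μ - μ / 2)) ∧
    (∀ ε : ℝ, 0 ≤ ε →
      0 ≤ stdNormalCDF (-ε / μ + μ / 2) - Real.exp ε * stdNormalCDF (-ε / μ - μ / 2) ∧
      stdNormalCDF (-ε / μ + μ / 2) - Real.exp ε * stdNormalCDF (-ε / μ - μ / 2) ≤ 1) :=
  ⟨fun _ _ _ h => antitone_gdpPrivacyProfile hμ.ne' h,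
    fun ε _ => ⟨gdpPrivacyProfile_nonneg hμ ε, gdpPrivacyProfile_le_one μ ε⟩⟩
end
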